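/- arXiv:2512.14949 — 8 statements merged into one kernel-verified Lean document; each statement's English description precedes it below -/
import Mathlib

section
/- Let X be a compact metric space with a non-isolated point. Then there exists a sequence (f_n) in C(X) that is Buo-Cauchy (for every strictly increasing sequence (n_k), the differences f_{n_{k+1}} - f_{n_k} order-converge to 0 in C(X)) but does not order-converge to any element of C(X). -/
namespace CXBuo

variable {X : Type*} [MetricSpace X] (x₀ : X)
  (h : ∀ ε > (0:ℝ), ∃ y : X, y ≠ x₀ ∧ dist y x₀ < ε)

noncomputable def pS : ℕ → {y : X // y ≠ x₀}
  | 0 => ⟨(h (1/4) (by norm_num)).choose, (h (1/4) (by norm_num)).choose_spec.1⟩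
  | (n+1) =>
      ⟨(h (dist ((pS n : X)) x₀ / 4)
          (div_pos (dist_pos.mpr (pS n).2) (by norm_num))).choose,
        (h (dist ((pS n : X)) x₀ / 4)
          (div_pos (dist_pos.mpr (pS n).2) (by norm_num))).choose_spec.1⟩

noncomputable def dS (n : ℕ) : ℝ := dist ((pS x₀ h n : X)) x₀

lemma dS_pos (n : ℕ) : 0 < dS x₀ h n := dist_pos.mpr (pS x₀ h n).2

lemma dS_zero_lt : dS x₀ h 0 < 1/4 := by
  have := (h (1/4) (by norm_num)).choose_spec.2
  simpa [dS, pS] using this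

lemma dS_succ_lt (n : ℕ) : dS x₀ h (n+1) < dS x₀ h n / 4 := by
  have := (h (dist ((pS x₀ h n : X)) x₀ / 4)
      (div_pos (dist_pos.mpr (pS x₀ h n).2) (by norm_num))).choose_spec.2
  simpa [dS, pS] using this

lemma dS_quarter (n : ℕ) : dS x₀ h (n+1) ≤ dS x₀ h n / 4 := (dS_succ_lt x₀ h n).le

lemma dS_anti : Antitone (dS x₀ h) := by
  apply antitone_nat_of_succ_le
  intro n
  have h1 := dS_quarter x₀ h n
  have h2 := dS_pos x₀ h n
  linarith

lemma dS_pow (m : ℕ) : dS x₀ h m < (1/4:ℝ)^(m+1) := by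
  induction m with
  | zero => simpa using dS_zero_lt x₀ h
  | succ n ih =>
      have h1 := dS_succ_lt x₀ h n
      have : (1/4:ℝ)^(n+1+1) = (1/4:ℝ)^(n+1)/4 := by ring
      rw [this]; linarith

lemma dS_sixteen (n : ℕ) : dS x₀ h (n+2) ≤ dS x₀ h n / 16 := by
  have h1 := dS_quarter x₀ h (n+1)
  have h2 := dS_quarter x₀ h n
  linarith

/-! ### Bumps -/

noncomputable def q (j : ℕ) : X := (pS x₀ h (2*j) : X)
noncomputable def w (j : ℕ) : X := (pS x₀ h (2*j+1) : X)

lemma dist_q (j : ℕ) : dist (q x₀ h j) x₀ = dS x₀ h (2*j) := rfl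
lemma dist_w (j : ℕ) : dist (w x₀ h j) x₀ = dS x₀ h (2*j+1) := rfl

noncomputable def bump (j : ℕ) : C(X, ℝ) :=
  ⟨fun x => max 0 (1 - dist x (q x₀ h j) / (dS x₀ h (2*j) / 2)), by fun_prop⟩

lemma bump_apply (j : ℕ) (x : X) :
    bump x₀ h j x = max 0 (1 - dist x (q x₀ h j) / (dS x₀ h (2*j) / 2)) := rfl

lemma bump_nonneg (j : ℕ) (x : X) : 0 ≤ bump x₀ h j x := le_max_left _ _

lemma bump_le_one (j : ℕ) (x : X) : bump x₀ h j x ≤ 1 := by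
  rw [bump_apply]
  have hd : 0 ≤ dist x (q x₀ h j) := dist_nonneg
  have hr : 0 < dS x₀ h (2*j) / 2 := by have := dS_pos x₀ h (2*j); linarith
  have : 0 ≤ dist x (q x₀ h j) / (dS x₀ h (2*j) / 2) := div_nonneg hd hr.le
  apply max_le <;> linarith

lemma bump_self (j : ℕ) : bump x₀ h j (q x₀ h j) = 1 := by
  rw [bump_apply]
  simp

lemma bump_eq_zero (j : ℕ) (x : X) (hx : dS x₀ h (2*j) / 2 ≤ dist x (q x₀ h j)) :
    bump x₀ h j x = 0 := by
  rw [bump_apply]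
  have hr : 0 < dS x₀ h (2*j) / 2 := by have := dS_pos x₀ h (2*j); linarith
  have : (1:ℝ) ≤ dist x (q x₀ h j) / (dS x₀ h (2*j) / 2) := (one_le_div hr).mpr hx
  have : 1 - dist x (q x₀ h j) / (dS x₀ h (2*j) / 2) ≤ 0 := by linarith
  exact max_eq_left this

lemma bump_support (j : ℕ) (x : X) (hx : bump x₀ h j x ≠ 0) :
    dist x (q x₀ h j) < dS x₀ h (2*j) / 2 := by
  by_contra hc
  exact hx (bump_eq_zero x₀ h j x (le_of_not_gt hc))

lemma bump_support_lt (j : ℕ) (x : X) (hx : bump x₀ h j x ≠ 0) :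
    dist x x₀ < 3/2 * dS x₀ h (2*j) := by
  have h1 := bump_support x₀ h j x hx
  have h2 := dist_triangle x (q x₀ h j) x₀
  rw [dist_q] at h2
  linarith

lemma bump_support_gt (j : ℕ) (x : X) (hx : bump x₀ h j x ≠ 0) :
    dS x₀ h (2*j) / 2 < dist x x₀ := by
  have h1 := bump_support x₀ h j x hx
  have h2 := dist_triangle (q x₀ h j) x x₀
  rw [dist_q, dist_comm (q x₀ h j) x] at h2
  linarith


/-! ### Partial sums of bumps -/

noncomputable def fS (n : ℕ) : C(X, ℝ) := ∑ j ∈ Finset.range n, bump x₀ h j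

lemma fS_apply (n : ℕ) (x : X) : fS x₀ h n x = ∑ j ∈ Finset.range n, bump x₀ h j x := by
  simp [fS]

lemma bump_disjoint {i j : ℕ} (hij : i < j) (x : X) :
    bump x₀ h i x = 0 ∨ bump x₀ h j x = 0 := by
  by_contra hc
  push_neg at hc
  have h1 := bump_support_gt x₀ h i x hc.1
  have h2 := bump_support_lt x₀ h j x hc.2
  have h3 : dS x₀ h (2*j) ≤ dS x₀ h (2*i+2) := dS_anti x₀ h (by omega)
  have h4 := dS_sixteen x₀ h (2*i)
  have h5 := dS_pos x₀ h (2*i)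
  linarith

lemma sum_bump_le_one (s : Finset ℕ) (x : X) : (∑ j ∈ s, bump x₀ h j x) ≤ 1 := by
  by_cases hex : ∃ j ∈ s, bump x₀ h j x ≠ 0
  · obtain ⟨j₀, hj₀, hne⟩ := hex
    rw [Finset.sum_eq_single_of_mem j₀ hj₀ ?_]
    · exact bump_le_one x₀ h j₀ x
    · intro b _ hb
      rcases lt_or_gt_of_ne hb with hlt | hlt
      · exact (bump_disjoint x₀ h hlt x).resolve_right hne
      · exact (bump_disjoint x₀ h hlt x).resolve_left hne
  · push_neg at hex
    rw [Finset.sum_eq_zero hex]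
    norm_num

/-- distance between distinct bump centers is large -/
lemma bump_at_q (i j : ℕ) (hij : i ≠ j) : bump x₀ h i (q x₀ h j) = 0 := by
  apply bump_eq_zero
  have hqi : dist (q x₀ h i) x₀ = dS x₀ h (2*i) := dist_q x₀ h i
  have hqj : dist (q x₀ h j) x₀ = dS x₀ h (2*j) := dist_q x₀ h j
  have htri := dist_triangle (q x₀ h i) (q x₀ h j) x₀
  have htri2 := dist_triangle (q x₀ h j) (q x₀ h i) x₀
  have hcomm : dist (q x₀ h i) (q x₀ h j) = dist (q x₀ h j) (q x₀ h i) := dist_comm _ _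
  rcases lt_or_gt_of_ne hij with hlt | hlt
  · -- i < j : dS(2j) ≤ dS(2i)/16
    have h3 : dS x₀ h (2*j) ≤ dS x₀ h (2*i+2) := dS_anti x₀ h (by omega)
    have h4 := dS_sixteen x₀ h (2*i)
    have h5 := dS_pos x₀ h (2*i)
    linarith
  · -- j < i : dS(2i) ≤ dS(2j)/16
    have h3 : dS x₀ h (2*i) ≤ dS x₀ h (2*j+2) := dS_anti x₀ h (by omega)
    have h4 := dS_sixteen x₀ h (2*j)
    have h5 := dS_pos x₀ h (2*j)
    linarith

lemma fS_at_q {j n : ℕ} (hj : j < n) : fS x₀ h n (q x₀ h j) = 1 := by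
  rw [fS_apply]
  rw [Finset.sum_eq_single_of_mem j (Finset.mem_range.mpr hj)
    (fun b _ hb => bump_at_q x₀ h b j hb)]
  exact bump_self x₀ h j

lemma bump_at_w (i j : ℕ) : bump x₀ h i (w x₀ h j) = 0 := by
  apply bump_eq_zero
  have hqi : dist (q x₀ h i) x₀ = dS x₀ h (2*i) := dist_q x₀ h i
  have hwj : dist (w x₀ h j) x₀ = dS x₀ h (2*j+1) := dist_w x₀ h j
  have htri := dist_triangle (q x₀ h i) (w x₀ h j) x₀
  have htri2 := dist_triangle (w x₀ h j) (q x₀ h i) x₀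
  have hcomm : dist (q x₀ h i) (w x₀ h j) = dist (w x₀ h j) (q x₀ h i) := dist_comm _ _
  rcases le_or_gt i j with hle | hlt
  · -- i ≤ j : dS(2j+1) ≤ dS(2i+1) ≤ dS(2i)/4
    have h3 : dS x₀ h (2*j+1) ≤ dS x₀ h (2*i+1) := dS_anti x₀ h (by omega)
    have h4 := dS_quarter x₀ h (2*i)
    have h5 := dS_pos x₀ h (2*i)
    linarith
  · -- j < i : dS(2i) ≤ dS(2j+2) ≤ dS(2j+1)/4
    have h3 : dS x₀ h (2*i) ≤ dS x₀ h (2*j+2) := dS_anti x₀ h (by omega)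
    have h4 : dS x₀ h (2*j+2) ≤ dS x₀ h (2*j+1) / 4 := by
      have := dS_quarter x₀ h (2*j+1)
      rwa [show 2*j+1+1 = 2*j+2 from by ring] at this
    have h5 := dS_pos x₀ h (2*j+1)
    have h6 := dS_pos x₀ h (2*i)
    linarith

lemma fS_at_w (j n : ℕ) : fS x₀ h n (w x₀ h j) = 0 := by
  rw [fS_apply]
  exact Finset.sum_eq_zero fun i _ => bump_at_w x₀ h i j

lemma fS_tail_eq {n m : ℕ} (hnm : n ≤ m) (x : X)
    (hx : 3/2 * dS x₀ h (2*n) ≤ dist x x₀) : fS x₀ h m x = fS x₀ h n x := by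
  rw [fS_apply, fS_apply, ← sub_eq_zero, ← Finset.sum_Ico_eq_sub _ hnm]
  apply Finset.sum_eq_zero
  intro j hj
  by_contra hne
  have h1 := bump_support_lt x₀ h j x hne
  have h2 : dS x₀ h (2*j) ≤ dS x₀ h (2*n) :=
    dS_anti x₀ h (by have := (Finset.mem_Ico.mp hj).1; omega)
  linarith


/-! ### The dominating sequence Z -/

noncomputable def Z (k : ℕ) : C(X, ℝ) :=
  ⟨fun x => min 1 (max 0 (2 - dist x x₀ / (2 * dS x₀ h (2*k)))), by fun_prop⟩

lemma Z_apply (k : ℕ) (x : X) :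
    Z x₀ h k x = min 1 (max 0 (2 - dist x x₀ / (2 * dS x₀ h (2*k)))) := rfl

lemma Z_nonneg (k : ℕ) : (0 : C(X,ℝ)) ≤ Z x₀ h k := by
  rw [ContinuousMap.le_def]
  intro x
  rw [Z_apply]
  simp only [ContinuousMap.zero_apply]
  exact le_min zero_le_one (le_max_left _ _)

lemma Z_eq_one {k : ℕ} {x : X} (hx : dist x x₀ ≤ 2 * dS x₀ h (2*k)) :
    Z x₀ h k x = 1 := by
  rw [Z_apply]
  have hδ : 0 < 2 * dS x₀ h (2*k) := by have := dS_pos x₀ h (2*k); linarith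
  have h1 : dist x x₀ / (2 * dS x₀ h (2*k)) ≤ 1 := (div_le_one hδ).mpr hx
  have h2 : (1:ℝ) ≤ 2 - dist x x₀ / (2 * dS x₀ h (2*k)) := by linarith
  exact min_eq_left (le_max_of_le_right h2)

lemma Z_eq_zero {k : ℕ} {x : X} (hx : 4 * dS x₀ h (2*k) ≤ dist x x₀) :
    Z x₀ h k x = 0 := by
  rw [Z_apply]
  have hδ : 0 < 2 * dS x₀ h (2*k) := by have := dS_pos x₀ h (2*k); linarith
  have h1 : (2:ℝ) ≤ dist x x₀ / (2 * dS x₀ h (2*k)) := by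
    rw [le_div_iff₀ hδ]; linarith
  have h2 : 2 - dist x x₀ / (2 * dS x₀ h (2*k)) ≤ 0 := by linarith
  rw [max_eq_left h2]
  exact min_eq_right zero_le_one

lemma Z_anti : Antitone (Z x₀ h) := by
  intro k l hkl
  rw [ContinuousMap.le_def]
  intro x
  rw [Z_apply, Z_apply]
  have hd : dS x₀ h (2*l) ≤ dS x₀ h (2*k) := dS_anti x₀ h (by omega)
  have hl : 0 < 2 * dS x₀ h (2*l) := by have := dS_pos x₀ h (2*l); linarith
  have hdiv : dist x x₀ / (2 * dS x₀ h (2*k)) ≤ dist x x₀ / (2 * dS x₀ h (2*l)) := by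
    apply div_le_div_of_nonneg_left dist_nonneg hl
    linarith
  exact min_le_min le_rfl (max_le_max le_rfl (by linarith))

lemma Z_glb : IsGLB (Set.range (Z x₀ h)) 0 := by
  constructor
  · rintro b ⟨k, rfl⟩
    exact Z_nonneg x₀ h k
  · intro c hc
    rw [ContinuousMap.le_def]
    have key : ∀ y : X, y ≠ x₀ → c y ≤ 0 := by
      intro y hy
      have hdy : 0 < dist y x₀ := dist_pos.mpr hy
      obtain ⟨n, hn⟩ := exists_pow_lt_of_lt_one (show (0:ℝ) < dist y x₀ / 4 by linarith)
        (show (1/4:ℝ) < 1 by norm_num)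
      have h1 : dS x₀ h (2*n) < (1/4:ℝ)^(2*n+1) := dS_pow x₀ h (2*n)
      have h2 : (1/4:ℝ)^(2*n+1) ≤ (1/4:ℝ)^n :=
        pow_le_pow_of_le_one (by norm_num) (by norm_num) (by omega)
      have hZ : Z x₀ h n y = 0 := Z_eq_zero x₀ h (by nlinarith)
      have := (ContinuousMap.le_def.mp (hc ⟨n, rfl⟩)) y
      rw [hZ] at this
      exact this
    intro x
    simp only [ContinuousMap.zero_apply]
    by_cases hx : x = x₀
    · subst hx
      by_contra hpos
      push_neg at hpos
      obtain ⟨δ, hδ, hball⟩ := Metric.continuousAt_iff.mp (c.continuous.continuousAt) (c x) hpos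
      obtain ⟨y, hy, hdy⟩ := h δ hδ
      have := hball hdy
      rw [Real.dist_eq] at this
      have hcy := key y hy
      have := abs_lt.mp this
      linarith
    · exact key x hx

end CXBuo

/-- Order convergence of a sequence in a lattice-ordered group. -/
def OrderConv {E : Type*} [Lattice E] [AddCommGroup E] (x : ℕ → E) (a : E) : Prop :=
  ∃ z : ℕ → E, Antitone z ∧ IsGLB (Set.range z) 0 ∧
    ∀ k : ℕ, ∃ N : ℕ, ∀ n ≥ N, |x n - a| ≤ z k

/-- Bourgain–uo Cauchy: differences along any strictly increasing subsequence
order-converge to zero. -/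
def BuoCauchy {E : Type*} [Lattice E] [AddCommGroup E] (x : ℕ → E) : Prop :=
  ∀ φ : ℕ → ℕ, StrictMono φ → OrderConv (fun k => x (φ (k + 1)) - x (φ k)) 0

/-- If `X` is a compact metric space with a non-isolated point, then `C(X)` is not
sequentially Buo-complete. -/
theorem CX_not_buo_complete {X : Type*} [MetricSpace X] [CompactSpace X]
    (x₀ : X) (h : ∀ ε > (0:ℝ), ∃ y : X, y ≠ x₀ ∧ dist y x₀ < ε) :
    ∃ f : ℕ → C(X, ℝ), BuoCauchy f ∧ ∀ g : C(X, ℝ), ¬ OrderConv f g := by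
  refine ⟨CXBuo.fS x₀ h, ?_, ?_⟩
  · -- Buo-Cauchy
    intro φ hφ
    refine ⟨CXBuo.Z x₀ h, CXBuo.Z_anti x₀ h, CXBuo.Z_glb x₀ h, ?_⟩
    intro k
    refine ⟨k, fun n hn => ?_⟩
    rw [sub_zero, ContinuousMap.le_def]
    intro x
    rw [ContinuousMap.abs_apply, ContinuousMap.sub_apply]
    have hmono : φ n ≤ φ (n+1) := (hφ (by omega)).le
    have hdiff : CXBuo.fS x₀ h (φ (n+1)) x - CXBuo.fS x₀ h (φ n) x
        = ∑ j ∈ Finset.Ico (φ n) (φ (n+1)), CXBuo.bump x₀ h j x := by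
      rw [CXBuo.fS_apply, CXBuo.fS_apply, Finset.sum_Ico_eq_sub _ hmono]
    rw [hdiff, abs_of_nonneg (Finset.sum_nonneg fun j _ => CXBuo.bump_nonneg x₀ h j x)]
    by_cases hex : ∃ j ∈ Finset.Ico (φ n) (φ (n+1)), CXBuo.bump x₀ h j x ≠ 0
    · obtain ⟨j, hj, hne⟩ := hex
      have h1 := CXBuo.bump_support_lt x₀ h j x hne
      have h2 : CXBuo.dS x₀ h (2*j) ≤ CXBuo.dS x₀ h (2*k) := by
        apply CXBuo.dS_anti x₀ h
        have hj1 := (Finset.mem_Ico.mp hj).1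
        have hj2 : n ≤ φ n := hφ.le_apply
        omega
      have hZ : CXBuo.Z x₀ h k x = 1 := CXBuo.Z_eq_one x₀ h
        (by have := CXBuo.dS_pos x₀ h (2*k); linarith)
      rw [hZ]
      exact CXBuo.sum_bump_le_one x₀ h _ x
    · push_neg at hex
      rw [Finset.sum_eq_zero hex]
      have := ContinuousMap.le_def.mp (CXBuo.Z_nonneg x₀ h k) x
      simpa using this
  · -- no order limit
    rintro g ⟨z, hzA, hzG, hzC⟩
    have hz0 : ∀ k x, (0:ℝ) ≤ z k x := fun k x => by
      have := ContinuousMap.le_def.mp (hzG.1 ⟨k, rfl⟩) x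
      simpa using this
    have key : ∀ j : ℕ, g (CXBuo.q x₀ h j) = 1 ∧ g (CXBuo.w x₀ h j) = 0 := by
      intro j
      have hidx : 2*(j+1) = 2*j+2 := by ring
      set ρ : ℝ := 3/2 * CXBuo.dS x₀ h (2*j+2) with hρdef
      have hρ : 0 < ρ := by have := CXBuo.dS_pos x₀ h (2*j+2); rw [hρdef]; linarith
      set η : C(X,ℝ) := ⟨fun x => min 1 (max 0 (dist x x₀ / ρ - 1)), by fun_prop⟩ with hηdef
      have hη_apply : ∀ x, η x = min 1 (max 0 (dist x x₀ / ρ - 1)) := fun x => rfl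
      have hη_le_one : ∀ x, η x ≤ 1 := fun x => min_le_left _ _
      have hη_zero : ∀ x, dist x x₀ ≤ ρ → η x = 0 := by
        intro x hx
        rw [hη_apply]
        have h1 : dist x x₀ / ρ ≤ 1 := (div_le_one hρ).mpr hx
        rw [max_eq_left (by linarith)]
        exact min_eq_right zero_le_one
      have hη_one : ∀ x, 2*ρ ≤ dist x x₀ → η x = 1 := by
        intro x hx
        rw [hη_apply]
        have h1 : (2:ℝ) ≤ dist x x₀ / ρ := by rw [le_div_iff₀ hρ]; linarith
        exact min_eq_left (le_max_of_le_right (by linarith))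
      set cj : C(X,ℝ) := η * |CXBuo.fS x₀ h (j+1) - g| with hcjdef
      have hcj_apply : ∀ x, cj x = η x * |CXBuo.fS x₀ h (j+1) x - g x| := by
        intro x
        rw [hcjdef, ContinuousMap.mul_apply, ContinuousMap.abs_apply,
          ContinuousMap.sub_apply]
      have hcj_le : ∀ k, cj ≤ z k := by
        intro k
        obtain ⟨N, hN⟩ := hzC k
        have hb := hN (max N (j+1)) (le_max_left _ _)
        rw [ContinuousMap.le_def]
        intro x
        rw [hcj_apply]
        by_cases hx : dist x x₀ ≤ ρ
        · rw [hη_zero x hx, zero_mul]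
          exact hz0 k x
        · push_neg at hx
          have heq : CXBuo.fS x₀ h (max N (j+1)) x = CXBuo.fS x₀ h (j+1) x := by
            apply CXBuo.fS_tail_eq x₀ h (le_max_right _ _)
            rw [hidx]
            linarith
          calc η x * |CXBuo.fS x₀ h (j+1) x - g x|
              ≤ 1 * |CXBuo.fS x₀ h (j+1) x - g x| :=
                mul_le_mul_of_nonneg_right (hη_le_one x) (abs_nonneg _)
            _ = |CXBuo.fS x₀ h (max N (j+1)) x - g x| := by rw [one_mul, heq]
            _ ≤ z k x := by
                have := ContinuousMap.le_def.mp hb x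
                simpa [ContinuousMap.abs_apply, ContinuousMap.sub_apply] using this
      have hcj0 : cj ≤ 0 := hzG.2 (by rintro b ⟨k, rfl⟩; exact hcj_le k)
      have h16 := CXBuo.dS_sixteen x₀ h (2*j)
      have hq4 : CXBuo.dS x₀ h (2*j+2) ≤ CXBuo.dS x₀ h (2*j+1) / 4 := by
        have := CXBuo.dS_quarter x₀ h (2*j+1)
        rwa [show 2*j+1+1 = 2*j+2 from by ring] at this
      have hpos2j := CXBuo.dS_pos x₀ h (2*j)
      have hpos2j1 := CXBuo.dS_pos x₀ h (2*j+1)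
      constructor
      · have h1 := ContinuousMap.le_def.mp hcj0 (CXBuo.q x₀ h j)
        rw [hcj_apply, CXBuo.fS_at_q x₀ h (by omega : j < j+1),
          hη_one _ (by rw [CXBuo.dist_q]; rw [hρdef]; linarith), one_mul] at h1
        simp only [ContinuousMap.zero_apply] at h1
        have := abs_nonpos_iff.mp h1
        linarith [sub_eq_zero.mp this]
      · have h1 := ContinuousMap.le_def.mp hcj0 (CXBuo.w x₀ h j)
        rw [hcj_apply, CXBuo.fS_at_w x₀ h j,
          hη_one _ (by rw [CXBuo.dist_w]; rw [hρdef]; linarith), one_mul] at h1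
        simp only [ContinuousMap.zero_apply] at h1
        have := abs_nonpos_iff.mp h1
        linarith [sub_eq_zero.mp this]
    obtain ⟨δ, hδ, hball⟩ :=
      Metric.continuousAt_iff.mp (g.continuous.continuousAt) (1/2) (by norm_num)
    obtain ⟨m, hm⟩ := exists_pow_lt_of_lt_one hδ (show (1/4:ℝ) < 1 by norm_num)
    have hmono1 : (1/4:ℝ)^(2*m+1) ≤ (1/4:ℝ)^m :=
      pow_le_pow_of_le_one (by norm_num) (by norm_num) (by omega)
    have hmono2 : (1/4:ℝ)^(2*m+1+1) ≤ (1/4:ℝ)^m :=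
      pow_le_pow_of_le_one (by norm_num) (by norm_num) (by omega)
    have hd1 : dist (CXBuo.q x₀ h m) x₀ < δ := by
      rw [CXBuo.dist_q]
      have := CXBuo.dS_pow x₀ h (2*m)
      linarith
    have hd2 : dist (CXBuo.w x₀ h m) x₀ < δ := by
      rw [CXBuo.dist_w]
      have := CXBuo.dS_pow x₀ h (2*m+1)
      linarith
    have h1 := hball hd1
    have h2 := hball hd2
    rw [Real.dist_eq, (key m).1] at h1
    rw [Real.dist_eq, (key m).2] at h2
    have ha1 := abs_lt.mp h1
    have ha2 := abs_lt.mp h2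
    linarith
end

section
/- Let (x_n) be a Buo-Cauchy sequence in c₀ and suppose x_n converges coordinatewise to x ∈ ℝ^ℕ. Then x ∈ c₀. -/
open Filter

/-- `z` decreases to `0` within the function lattice `S` (pointwise order):
all terms lie in `S`, the sequence is antitone, nonnegative, and `0` is its
greatest lower bound within `S`. -/
def DecToZeroIn {X : Type*} (S : Set (X → ℝ)) (z : ℕ → X → ℝ) : Prop :=
  (∀ m, z m ∈ S) ∧ Antitone z ∧ (∀ m, (0 : X → ℝ) ≤ z m) ∧
    ∀ w ∈ S, (∀ m, w ≤ z m) → w ≤ 0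

/-- Order convergence of `f` to `g` within the function lattice `S`. -/
def OrderConvIn {X : Type*} (S : Set (X → ℝ)) (f : ℕ → X → ℝ) (g : X → ℝ) : Prop :=
  ∃ z : ℕ → X → ℝ, DecToZeroIn S z ∧
    ∀ m : ℕ, ∃ N : ℕ, ∀ n ≥ N, ∀ x, |f n x - g x| ≤ z m x

/-- Bourgain–uo Cauchy within `S`: along every strictly increasing sequence of
indices the differences order-converge to `0` in `S`. -/
def BuoCauchyIn {X : Type*} (S : Set (X → ℝ)) (f : ℕ → X → ℝ) : Prop :=
  ∀ φ : ℕ → ℕ, StrictMono φ → OrderConvIn S (fun k => f (φ (k + 1)) - f (φ k)) 0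

/-- The lattice `c₀` of null real sequences. -/
def memC0 : Set (ℕ → ℝ) := {x | Tendsto x atTop (nhds 0)}

/-- The lattice `ℓ∞(X)` of bounded real functions on `X`. -/
def memLinf {X : Type*} : Set (X → ℝ) := {f | ∃ M : ℝ, ∀ x, |f x| ≤ M}

/-- The coordinatewise limit of a Buo-Cauchy sequence in `c₀` lies in `c₀`. -/
theorem pointwise_limit_in_c0 (x : ℕ → ℕ → ℝ)
    (hmem : ∀ n, x n ∈ memC0) (hc : BuoCauchyIn memC0 x)
    (g : ℕ → ℝ) (hlim : ∀ k, Tendsto (fun n => x n k) atTop (nhds (g k))) :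
    g ∈ memC0 := by
  by_contra hg
  rw [memC0, Set.mem_setOf_eq, Metric.tendsto_atTop] at hg
  push_neg at hg
  obtain ⟨ε, hε, hfreq⟩ := hg
  simp only [Real.dist_eq, sub_zero, not_lt] at hfreq
  have hε4 : (0:ℝ) < ε / 4 := by linarith
  -- c₀ membership in metric form
  have hmem' : ∀ n, ∃ K, ∀ k ≥ K, |x n k| ≤ ε / 4 := by
    intro n
    have := (Metric.tendsto_atTop.mp (hmem n)) (ε/4) hε4
    obtain ⟨K, hK⟩ := this
    exact ⟨K, fun k hk => le_of_lt (by simpa [Real.dist_eq] using hK k hk)⟩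
  -- step existence
  have hstep : ∀ p : ℕ × ℕ, ∃ q : ℕ × ℕ, p.1 < q.1 ∧ p.2 < q.2 ∧
      |x q.1 p.2 - g p.2| ≤ ε/4 ∧ |x q.1 q.2| ≤ ε/4 ∧ ε ≤ |g q.2| := by
    intro p
    obtain ⟨N, hN⟩ := (Metric.tendsto_atTop.mp (hlim p.2)) (ε/4) hε4
    set n1 := max N (p.1 + 1) with hn1
    have h1 : |x n1 p.2 - g p.2| ≤ ε/4 :=
      le_of_lt (by simpa [Real.dist_eq] using hN n1 (le_max_left _ _))
    obtain ⟨K, hK⟩ := hmem' n1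
    obtain ⟨k2, hk2ge, hk2⟩ := hfreq (max K (p.2 + 1))
    refine ⟨(n1, k2), ?_, ?_, h1, ?_, hk2⟩
    · exact lt_of_lt_of_le (Nat.lt_succ_self _) (le_max_right _ _)
    · exact lt_of_lt_of_le (Nat.lt_succ_self _) ((le_max_right _ _).trans hk2ge)
    · exact hK k2 ((le_max_left _ _).trans hk2ge)
  choose f hf using hstep
  -- base point
  obtain ⟨K0, hK0⟩ := hmem' 0
  obtain ⟨k0, hk0ge, hk0⟩ := hfreq K0
  set p : ℕ → ℕ × ℕ := fun j => f^[j] (0, k0) with hp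
  have hpsucc : ∀ j, p (j + 1) = f (p j) := by
    intro j
    simp [hp, Function.iterate_succ_apply']
  -- invariant
  have hinv : ∀ j, |x (p j).1 (p j).2| ≤ ε/4 ∧ ε ≤ |g (p j).2| := by
    intro j
    induction j with
    | zero => exact ⟨hK0 k0 hk0ge, hk0⟩
    | succ j ih =>
      rw [hpsucc]
      exact ⟨(hf (p j)).2.2.2.1, (hf (p j)).2.2.2.2⟩
  set φ : ℕ → ℕ := fun j => (p j).1 with hφ
  set K : ℕ → ℕ := fun j => (p j).2 with hK
  have hφmono : StrictMono φ := by
    apply strictMono_nat_of_lt_succ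
    intro j
    have := (hf (p j)).1
    simpa [hφ, hpsucc j] using this
  have hKmono : StrictMono K := by
    apply strictMono_nat_of_lt_succ
    intro j
    have := (hf (p j)).2.1
    simpa [hK, hpsucc j] using this
  obtain ⟨z, ⟨hzmem, _, _, _⟩, hconv⟩ := hc φ hφmono
  obtain ⟨N, hN⟩ := hconv 0
  obtain ⟨M, hM⟩ := (Metric.tendsto_atTop.mp (hzmem 0)) (ε/2) (by linarith)
  set k := max N M with hkdef
  have hKk : M ≤ K k := le_trans (le_max_right _ _) (hKmono.le_apply)
  have hz : |z 0 (K k)| < ε/2 := by simpa [Real.dist_eq] using hM (K k) hKk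
  have hb := hN k (le_max_left _ _) (K k)
  simp only [Pi.sub_apply, Pi.zero_apply, sub_zero] at hb
  -- lower bound on the difference
  have h1 : |x (φ (k+1)) (K k) - g (K k)| ≤ ε/4 := by
    have := (hf (p k)).2.2.1
    simpa [hφ, hK, hpsucc k] using this
  have h2 : |x (φ k) (K k)| ≤ ε/4 := (hinv k).1
  have h3 : ε ≤ |g (K k)| := (hinv k).2
  set a := x (φ (k+1)) (K k)
  set b := x (φ k) (K k)
  have htri : |g (K k)| ≤ |g (K k) - a| + |a - b| + |b| := by
    calc |g (K k)| = |(g (K k) - a) + (a - b) + b| := by ring_nf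
    _ ≤ |(g (K k) - a) + (a - b)| + |b| := abs_add_le _ _
    _ ≤ |g (K k) - a| + |a - b| + |b| := by
        have := abs_add_le (g (K k) - a) (a - b)
        linarith
  have h1' : |g (K k) - a| ≤ ε/4 := by rwa [abs_sub_comm] at h1
  have hlow : ε/2 ≤ |a - b| := by linarith
  have hzk : z 0 (K k) ≤ |z 0 (K k)| := le_abs_self _
  linarith [hb]
end

section
/- The Banach lattice c₀ is sequentially Buo-complete: every Buo-Cauchy sequence in c₀ order-converges (equivalently, Buo-converges) to an element of c₀. -/
open Filter

/-- If `z` decreases to `0` within `c₀`, then it converges to `0` pointwise. -/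
lemma decToZero_pointwise {z : ℕ → ℕ → ℝ} (hz : DecToZeroIn memC0 z) (i : ℕ) :
    Tendsto (fun m => z m i) atTop (nhds 0) := by
  obtain ⟨hmem, hanti, hpos, hinf⟩ := hz
  have hbdd : ∀ j, BddBelow (Set.range fun m => z m j) :=
    fun j => ⟨0, by rintro _ ⟨m, rfl⟩; exact hpos m j⟩
  set w : ℕ → ℝ := fun j => ⨅ m, z m j with hw
  have hwle : ∀ m, ∀ j, w j ≤ z m j := fun m j => ciInf_le (hbdd j) m
  have hwnn : ∀ j, 0 ≤ w j := fun j => le_ciInf fun m => hpos m j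
  have hwc0 : w ∈ memC0 := squeeze_zero hwnn (fun j => hwle 0 j) (hmem 0)
  have hw0 : ∀ j, w j ≤ 0 := hinf w hwc0 (fun m j => hwle m j)
  have hmono : Antitone (fun m => z m i) := fun a b hab => hanti hab i
  have h := tendsto_atTop_ciInf hmono (hbdd i)
  have : (⨅ m, z m i) = 0 := le_antisymm (hw0 i) (hwnn i)
  rwa [this] at h

/-- From a step-wise extraction hypothesis, produce a strictly increasing
sequence of indices visiting pairs `(φ (2j), φ (2j+1))` together with a
strictly increasing auxiliary sequence `w` satisfying `Q`. -/
lemma exists_alternating (Q : ℕ → ℕ → ℕ → Prop)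
    (h : ∀ M : ℕ, ∃ a p q, M < a ∧ M < p ∧ p < q ∧ Q a p q) :
    ∃ φ w : ℕ → ℕ, StrictMono φ ∧ StrictMono w ∧
      ∀ j, Q (w j) (φ (2*j)) (φ (2*j+1)) := by
  choose fa fp fq ha hp hpq hQ using h
  let s : ℕ → ℕ := fun j => Nat.rec 0 (fun _ prev => max (fa prev) (fq prev)) j
  have hs : ∀ j, s (j+1) = max (fa (s j)) (fq (s j)) := fun j => rfl
  refine ⟨fun k => if k % 2 = 0 then fp (s (k/2)) else fq (s (k/2)), fun j => fa (s j), ?_, ?_, ?_⟩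
  · apply strictMono_nat_of_lt_succ
    intro k
    rcases Nat.even_or_odd k with ⟨t, ht⟩ | ⟨t, ht⟩
    · have h1 : k % 2 = 0 := by omega
      have h2 : (k + 1) % 2 = 1 := by omega
      have h3 : k / 2 = t := by omega
      have h4 : (k + 1) / 2 = t := by omega
      simp only [h1, h2, h3, h4, if_pos rfl, if_neg (by omega : ¬(1:ℕ) = 0)]
      exact hpq (s t)
    · have h1 : k % 2 = 1 := by omega
      have h3 : k / 2 = t := by omega
      have h2 : (k + 1) % 2 = 0 := by omega
      have h4 : (k + 1) / 2 = t + 1 := by omega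
      simp only [h1, h2, h3, h4, if_pos rfl, if_neg (by omega : ¬(1:ℕ) = 0)]
      calc fq (s t) ≤ s (t+1) := by rw [hs]; exact le_max_right _ _
        _ < fp (s (t+1)) := hp (s (t+1))
  · apply strictMono_nat_of_lt_succ
    intro j
    calc fa (s j) ≤ s (j+1) := by rw [hs]; exact le_max_left _ _
      _ < fa (s (j+1)) := ha (s (j+1))
  · intro j
    have h1 : (2*j) % 2 = 0 := by omega
    have h2 : (2*j+1) % 2 = 1 := by omega
    have h3 : (2*j) / 2 = j := by omega
    have h4 : (2*j+1) / 2 = j := by omega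
    simp only [h1, h2, h3, h4, if_pos rfl, if_neg (by omega : ¬(1:ℕ) = 0)]
    exact hQ (s j)

/-- `c₀` is sequentially Buo-complete: every Buo-Cauchy sequence in `c₀`
order-converges to an element of `c₀`. -/
theorem c0_buo_complete (x : ℕ → ℕ → ℝ)
    (hmem : ∀ n, x n ∈ memC0) (hc : BuoCauchyIn memC0 x) :
    ∃ g ∈ memC0, OrderConvIn memC0 x g := by
  have hx0 : ∀ n, Tendsto (x n) atTop (nhds 0) := hmem
  -- Step 1: the sequence converges pointwise (coordinatewise Cauchy).
  have hcau : ∀ i, ∃ l, Tendsto (fun n => x n i) atTop (nhds l) := by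
    intro i
    apply cauchySeq_tendsto_of_complete
    by_contra hnc
    rw [Metric.cauchySeq_iff] at hnc
    push_neg at hnc
    obtain ⟨ε, hε, hN⟩ := hnc
    have step : ∀ M : ℕ, ∃ a p q, M < a ∧ M < p ∧ p < q ∧ ε ≤ |x q i - x p i| := by
      intro M
      obtain ⟨m, hm, n, hn, hd⟩ := hN (M+1)
      rw [Real.dist_eq] at hd
      have hmn : m ≠ n := by rintro rfl; simp at hd; linarith
      refine ⟨M+1, min m n, max m n, by omega, by omega, by omega, ?_⟩
      rcases le_or_gt m n with hle | hlt
      · rw [min_eq_left hle, max_eq_right hle, abs_sub_comm]; exact hd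
      · rw [min_eq_right hlt.le, max_eq_left hlt.le]; exact hd
    obtain ⟨φ, w, hφ, hw, hQ⟩ := exists_alternating (fun _ p q => ε ≤ |x q i - x p i|) step
    obtain ⟨z, hz, hzc⟩ := hc φ hφ
    obtain ⟨m, hm⟩ : ∃ m, z m i < ε :=
      ((decToZero_pointwise hz i).eventually (gt_mem_nhds hε)).exists
    obtain ⟨N, hNz⟩ := hzc m
    have h1 := hNz (2*N) (by omega) i
    have h2 := hQ N
    simp only [Pi.sub_apply, Pi.zero_apply, sub_zero] at h1
    linarith
  choose g hg using hcau
  -- Step 2: the key uniform estimate.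
  have key : ∀ ε > (0:ℝ), ∃ X, ∀ i ≥ X, ∀ n, |x n i - g i| ≤ ε := by
    by_contra hk
    push_neg at hk
    obtain ⟨ε, hε, hbad⟩ := hk
    have step : ∀ M : ℕ, ∃ a p q, M < a ∧ M < p ∧ p < q ∧ ε/16 ≤ |x q a - x p a| := by
      intro M
      have hsmall : ∀ᶠ a in atTop, ∀ p ∈ Finset.range (M+2), |x p a| < ε/8 := by
        rw [Filter.eventually_all_finset]
        intro p _
        have := (hx0 p).abs
        rw [abs_zero] at this
        exact this.eventually (gt_mem_nhds (by positivity))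
      have hfreq : ∃ᶠ a in atTop, ∃ n, ε < |x n a - g a| := by
        rw [Filter.frequently_atTop]
        intro b
        obtain ⟨i, hi, n, hn⟩ := hbad b
        exact ⟨i, hi, n, hn⟩
      obtain ⟨a, ⟨n, hna⟩, hsm, haM⟩ :=
        (hfreq.and_eventually (hsmall.and (eventually_gt_atTop M))).exists
      have hpM : |x (M+1) a| < ε/8 := hsm (M+1) (by simp)
      rcases le_or_gt (|g a|) (ε/4) with hga | hga
      · have hxn : ε - ε/4 ≤ |x n a| := by
          have h1 : |x n a - g a| ≤ |x n a| + |g a| := abs_sub _ _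
          linarith
        have hnM : M + 1 < n := by
          by_contra hle
          have := hsm n (by simp; omega)
          linarith
        refine ⟨a, M+1, n, haM, by omega, hnM, ?_⟩
        have h2 : |x n a| - |x (M+1) a| ≤ |x n a - x (M+1) a| := abs_sub_abs_le_abs_sub _ _
        linarith
      · obtain ⟨N, hNq⟩ := Metric.tendsto_atTop.mp (hg a) (ε/16) (by positivity)
        set q := max N (M+2) with hq
        have hqa : |x q a - g a| < ε/16 := by
          have := hNq q (le_max_left _ _); rwa [Real.dist_eq] at this
        have hxq : ε/4 - ε/16 ≤ |x q a| := by
          have h1 : |g a| - |x q a| ≤ |g a - x q a| := abs_sub_abs_le_abs_sub _ _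
          rw [abs_sub_comm] at h1
          linarith
        refine ⟨a, M+1, q, haM, by omega, by omega, ?_⟩
        have h2 : |x q a| - |x (M+1) a| ≤ |x q a - x (M+1) a| := abs_sub_abs_le_abs_sub _ _
        linarith
    obtain ⟨φ, w, hφ, hw, hQ⟩ := exists_alternating (fun a p q => ε/16 ≤ |x q a - x p a|) step
    obtain ⟨z, hz, hzc⟩ := hc φ hφ
    have hz0 : Tendsto (z 0) atTop (nhds 0) := hz.1 0
    obtain ⟨X, hX⟩ := Metric.tendsto_atTop.mp hz0 (ε/16) (by positivity)
    obtain ⟨N, hNz⟩ := hzc 0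
    set j := max N X with hj
    have h1 := hNz (2*j) (by omega) (w j)
    simp only [Pi.sub_apply, Pi.zero_apply, sub_zero] at h1
    have h2 := hQ j
    have h3 : dist (z 0 (w j)) 0 < ε/16 := hX (w j) (le_trans (le_max_right N X) (hw.le_apply))
    rw [Real.dist_eq, sub_zero] at h3
    have h4 : z 0 (w j) ≤ |z 0 (w j)| := le_abs_self _
    linarith
  -- Step 3: build the dominating decreasing sequence and conclude.
  have hconv : ∀ i, Tendsto (fun n => |x n i - g i|) atTop (nhds 0) := by
    intro i
    have h1 : Tendsto (fun n => x n i - g i) atTop (nhds (g i - g i)) := (hg i).sub_const (g i)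
    rw [sub_self] at h1
    have := h1.abs
    rwa [abs_zero] at this
  have hbdd : ∀ m i, BddAbove (Set.range fun n => |x (m + n) i - g i|) := by
    intro m i
    apply BddAbove.mono (Set.range_subset_range_iff_exists_comp.mpr ⟨fun n => m + n, rfl⟩)
      (hconv i).bddAbove_range
  set v : ℕ → ℕ → ℝ := fun m i => ⨆ n, |x (m + n) i - g i| with hv
  have hub : ∀ m i n, m ≤ n → |x n i - g i| ≤ v m i := by
    intro m i n hmn
    have : n = m + (n - m) := by omega
    rw [this]
    exact le_ciSup (hbdd m i) (n - m)
  have hnn : ∀ m i, 0 ≤ v m i := fun m i => (abs_nonneg _).trans (le_ciSup (hbdd m i) 0)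
  have hanti : Antitone v := by
    intro a b hab i
    exact ciSup_le fun n => hub a i (b + n) (by omega)
  have htend : ∀ i, Tendsto (fun m => v m i) atTop (nhds 0) := by
    intro i
    rw [Metric.tendsto_atTop]
    intro ε hε
    obtain ⟨N, hN⟩ := Metric.tendsto_atTop.mp (hconv i) (ε/2) (by positivity)
    refine ⟨N, fun m hm => ?_⟩
    rw [Real.dist_eq, sub_zero, abs_of_nonneg (hnn m i)]
    have : v m i ≤ ε/2 := ciSup_le fun n => by
      have := hN (m + n) (by omega)
      rw [Real.dist_eq, sub_zero, abs_abs] at this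
      linarith
    linarith
  have hvc0 : ∀ m, v m ∈ memC0 := by
    intro m
    rw [memC0, Set.mem_setOf_eq, Metric.tendsto_atTop]
    intro ε hε
    obtain ⟨X, hX⟩ := key (ε/2) (by positivity)
    refine ⟨X, fun i hi => ?_⟩
    rw [Real.dist_eq, sub_zero, abs_of_nonneg (hnn m i)]
    have : v m i ≤ ε/2 := ciSup_le fun n => hX i hi (m + n)
    linarith
  have hgc0 : g ∈ memC0 := by
    have h1 : Tendsto (fun i => x 0 i - g i) atTop (nhds 0) :=
      squeeze_zero_norm (fun i => by
        simpa [Real.norm_eq_abs] using hub 0 i 0 le_rfl) (hvc0 0)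
    have h2 := (hx0 0).sub h1
    rw [sub_zero] at h2
    rw [memC0, Set.mem_setOf_eq]
    have : (fun i => x 0 i - (x 0 i - g i)) = g := by funext i; ring
    rwa [this] at h2
  refine ⟨g, hgc0, v, ⟨hvc0, hanti, fun m i => hnn m i, ?_⟩, ?_⟩
  · intro w hw hwle i
    exact ge_of_tendsto' (htend i) (fun m => hwle m i)
  · intro m
    exact ⟨m, fun n hn i => hub m i n hn⟩
end

section
/- The Banach lattice ℓ∞ is sequentially Buo-complete: every Buo-Cauchy sequence in ℓ∞ order-converges to an element of ℓ∞. Moreover, the element y defined by y(k) := sup_n |x_n(k)| belongs to ℓ∞ and dominates the sequence. -/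
open Filter

/-- If `z` decreases to zero in `ℓ∞`, its pointwise infimum is `0`. -/
lemma aux_inf_zero (z : ℕ → ℕ → ℝ) (hd : DecToZeroIn memLinf z) (k : ℕ)
    (ε : ℝ) (hε : 0 < ε) : ∃ m, z m k < ε := by
  by_contra h
  push_neg at h
  obtain ⟨_, _, hnn, hinf⟩ := hd
  have hw : (fun j => if j = k then ε else 0) ∈ memLinf := by
    refine ⟨ε, fun j => ?_⟩
    by_cases hj : j = k <;> simp [hj, abs_of_nonneg, hε.le]
  have hle : ∀ m, (fun j => if j = k then ε else 0) ≤ z m := by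
    intro m j
    by_cases hj : j = k
    · simpa [hj] using h m
    · simpa [hj] using hnn m j
  have := hinf _ hw hle k
  simp at this
  linarith

lemma aux_fin_bdd (x : ℕ → ℕ → ℝ) (hmem : ∀ n, x n ∈ memLinf) (m : ℕ) :
    ∃ M : ℝ, ∀ i ≤ m, ∀ k, |x i k| ≤ M := by
  induction m with
  | zero =>
    obtain ⟨M, hM⟩ := hmem 0
    exact ⟨M, fun i hi k => by simpa [Nat.le_zero.mp hi] using hM k⟩
  | succ m ih =>
    obtain ⟨M, hM⟩ := ih
    obtain ⟨M', hM'⟩ := hmem (m + 1)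
    refine ⟨max M M', fun i hi k => ?_⟩
    rcases Nat.le_succ_iff.mp hi with h | h
    · exact le_trans (hM i h k) (le_max_left _ _)
    · exact le_trans (by rw [h]; exact hM' k) (le_max_right _ _)

lemma aux_glob_bdd (x : ℕ → ℕ → ℝ) (hmem : ∀ n, x n ∈ memLinf)
    (hc : BuoCauchyIn memLinf x) : ∃ M : ℝ, ∀ n k, |x n k| ≤ M := by
  by_contra h
  push_neg at h
  have key : ∀ n j : ℕ, ∃ n', n < n' ∧ ∃ k, (j : ℝ) + 1 < |x n' k - x n k| := by
    intro n j
    obtain ⟨M, hM⟩ := aux_fin_bdd x hmem n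
    obtain ⟨n', k, hk⟩ := h (M + ((j : ℝ) + 1))
    have hMnn : 0 ≤ (j : ℝ) + 1 := by positivity
    have hn' : n < n' := by
      by_contra hle
      have := hM n' (le_of_not_gt hle) k
      have h0 : (0:ℝ) ≤ M := le_trans (abs_nonneg _) (hM 0 (Nat.zero_le _) 0)
      linarith
    have h1 : |x n' k| - |x n k| ≤ |x n' k - x n k| := abs_sub_abs_le_abs_sub _ _
    have h2 := hM n le_rfl k
    exact ⟨n', hn', k, by linarith⟩
  choose F hF1 K hF2 using key
  let ψ : ℕ → ℕ := fun j => Nat.rec 0 (fun j n => F n j) j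
  have hψ : StrictMono ψ := strictMono_nat_of_lt_succ (fun j => hF1 (ψ j) j)
  obtain ⟨z, hdz, hdom⟩ := hc ψ hψ
  obtain ⟨Mz, hMz⟩ := hdz.1 0
  obtain ⟨N, hN⟩ := hdom 0
  set j := N + Nat.ceil Mz with hj
  have h1 := hN j (Nat.le_add_right _ _) (K (ψ j) j)
  simp only [Pi.sub_apply, Pi.zero_apply, sub_zero] at h1
  have h2 : z 0 (K (ψ j) j) ≤ Mz := le_trans (le_abs_self _) (hMz _)
  have h3 : Mz ≤ (j : ℝ) := le_trans (Nat.le_ceil Mz)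
    (by exact_mod_cast Nat.le_add_left _ _)
  have h4 := hF2 (ψ j) j
  have h5 : ψ (j + 1) = F (ψ j) j := rfl
  rw [h5] at h1
  linarith

lemma aux_conv (x : ℕ → ℕ → ℝ) (hc : BuoCauchyIn memLinf x) (k : ℕ) :
    ∃ l, Tendsto (fun n => x n k) atTop (nhds l) := by
  have hcauchy : CauchySeq (fun n => x n k) := by
    rw [Metric.cauchySeq_iff']
    by_contra hcon
    push_neg at hcon
    obtain ⟨ε, hε, hfail⟩ := hcon
    choose F hF1 hF2 using hfail
    have hFgt : ∀ n, n < F n := by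
      intro n
      rcases lt_or_eq_of_le (hF1 n) with h | h
      · exact h
      · exfalso; have := hF2 n; rw [← h, dist_self] at this; linarith
    let φ : ℕ → ℕ := fun j => Nat.rec 0 (fun _ n => F n) j
    have hφ : StrictMono φ := strictMono_nat_of_lt_succ (fun j => hFgt (φ j))
    obtain ⟨z, hdz, hdom⟩ := hc φ hφ
    obtain ⟨m, hm⟩ := aux_inf_zero z hdz k ε hε
    obtain ⟨N, hN⟩ := hdom m
    have h1 := hN N le_rfl k
    simp only [Pi.sub_apply, Pi.zero_apply, sub_zero] at h1
    have h2 : φ (N + 1) = F (φ N) := rfl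
    have h3 := hF2 (φ N)
    rw [Real.dist_eq] at h3
    rw [h2] at h1
    linarith
  exact cauchySeq_tendsto_of_complete hcauchy

/-- `ℓ∞` is sequentially Buo-complete; moreover `y k := ⨆ n, |x n k|` belongs to
`ℓ∞` and dominates the sequence. -/
theorem linf_buo_complete (x : ℕ → ℕ → ℝ)
    (hmem : ∀ n, x n ∈ memLinf) (hc : BuoCauchyIn memLinf x) :
    (∃ g ∈ memLinf, OrderConvIn memLinf x g) ∧
    (fun k => ⨆ n, |x n k|) ∈ memLinf ∧
    ∀ n k, |x n k| ≤ ⨆ m, |x m k| := by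
  obtain ⟨M, hM⟩ := aux_glob_bdd x hmem hc
  have hM0 : (0:ℝ) ≤ M := le_trans (abs_nonneg _) (hM 0 0)
  have hbdd : ∀ k, BddAbove (Set.range fun n => |x n k|) :=
    fun k => ⟨M, by rintro _ ⟨n, rfl⟩; exact hM n k⟩
  choose g hg using fun k => aux_conv x hc k
  have hgM : ∀ k, |g k| ≤ M := by
    intro k
    exact le_of_tendsto' ((hg k).abs) (fun n => hM n k)
  -- the dominating sequence for order convergence to g
  set z : ℕ → ℕ → ℝ := fun m k => ⨆ n, |x (n + m) k - g k| with hzdef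
  have hzbdd : ∀ m k, BddAbove (Set.range fun n => |x (n + m) k - g k|) := by
    intro m k
    refine ⟨M + M, ?_⟩
    rintro _ ⟨n, rfl⟩
    calc |x (n + m) k - g k| ≤ |x (n + m) k| + |g k| := abs_sub _ _
    _ ≤ M + M := add_le_add (hM _ _) (hgM k)
  have hznn : ∀ m k, 0 ≤ z m k :=
    fun m k => le_trans (abs_nonneg _) (le_ciSup (hzbdd m k) 0)
  have hzle : ∀ m k, z m k ≤ M + M := by
    intro m k
    refine ciSup_le fun n => ?_
    calc |x (n + m) k - g k| ≤ |x (n + m) k| + |g k| := abs_sub _ _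
    _ ≤ M + M := add_le_add (hM _ _) (hgM k)
  have hzmem : ∀ m, z m ∈ memLinf := by
    intro m
    exact ⟨M + M, fun k => by rw [abs_of_nonneg (hznn m k)]; exact hzle m k⟩
  have hzanti : Antitone z := by
    refine antitone_nat_of_succ_le fun m k => ?_
    refine ciSup_le fun n => ?_
    have := le_ciSup (hzbdd m k) (n + 1)
    simpa [Nat.add_assoc, Nat.add_comm 1 m] using this
  have hzdomin : ∀ m : ℕ, ∀ n ≥ m, ∀ k, |x n k - g k| ≤ z m k := by
    intro m n hn k
    have := le_ciSup (hzbdd m k) (n - m)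
    simpa [Nat.sub_add_cancel hn] using this
  have hzinf : ∀ w ∈ memLinf, (∀ m, w ≤ z m) → w ≤ (0 : ℕ → ℝ) := by
    intro w hw hle k
    show w k ≤ 0
    by_contra hcon
    push_neg at hcon
    have hε : 0 < w k / 2 := by linarith
    have htend := (hg k)
    rw [Metric.tendsto_atTop] at htend
    obtain ⟨N, hN⟩ := htend (w k / 2) hε
    have hzN : z N k ≤ w k / 2 := by
      refine ciSup_le fun n => ?_
      have := hN (n + N) (Nat.le_add_left _ _)
      rw [Real.dist_eq] at this
      linarith
    have := hle N k
    simp only [hzdef] at this hzN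
    linarith
  refine ⟨⟨g, ⟨M, hgM⟩, z, ⟨hzmem, hzanti, fun m k => hznn m k, hzinf⟩,
    fun m => ⟨m, fun n hn k => hzdomin m n hn k⟩⟩, ?_, ?_⟩
  · refine ⟨M, fun k => ?_⟩
    have h1 : (0:ℝ) ≤ ⨆ n, |x n k| := le_trans (abs_nonneg _) (le_ciSup (hbdd k) 0)
    rw [abs_of_nonneg h1]
    exact ciSup_le fun n => hM n k
  · intro n k
    exact le_ciSup (hbdd k) n
end

section
/- Let (x_n) be a Buo-Cauchy sequence in c₀ converging coordinatewise to x ∈ c₀. Then y defined by y(k) := sup_n |x_n(k)| belongs to c₀. -/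
open Filter

/-- For a Buo-Cauchy sequence in `c₀` with coordinatewise limit in `c₀`, the
pointwise supremum `y k := ⨆ n, |x n k|` belongs to `c₀`. -/
theorem sup_of_buoCauchy_in_c0 (x : ℕ → ℕ → ℝ)
    (hmem : ∀ n, x n ∈ memC0) (hc : BuoCauchyIn memC0 x)
    (g : ℕ → ℝ) (hg : g ∈ memC0)
    (hlim : ∀ k, Tendsto (fun n => x n k) atTop (nhds (g k))) :
    (fun k => ⨆ n, |x n k|) ∈ memC0 := by
  have hbdd : ∀ k, BddAbove (Set.range fun n => |x n k|) :=
    fun k => ((hlim k).abs).bddAbove_range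
  have hy0 : ∀ k, 0 ≤ ⨆ n, |x n k| :=
    fun k => (abs_nonneg (x 0 k)).trans (le_ciSup (hbdd k) 0)
  rw [memC0, Set.mem_setOf_eq, Metric.tendsto_atTop]
  by_contra hY
  push_neg at hY
  obtain ⟨ε, hε, hfreq⟩ := hY
  set δ := ε / 4 with hδ
  have hδ0 : 0 < δ := by positivity
  have hx : ∀ n, ∃ Kn, ∀ k ≥ Kn, |x n k| < δ := by
    intro n
    have := (Metric.tendsto_atTop.mp (hmem n)) δ hδ0
    simpa [Real.dist_eq] using this
  choose Kx hKx using hx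
  obtain ⟨Kg, hKg⟩ : ∃ Kg, ∀ k ≥ Kg, |g k| < δ := by
    have := (Metric.tendsto_atTop.mp hg) δ hδ0
    simpa [Real.dist_eq] using this
  have step : ∀ K N : ℕ, ∃ p : ℕ × ℕ × ℕ, K < p.1 ∧ N < p.2.1 ∧ p.2.1 < p.2.2 ∧
      3 * δ < |x p.2.1 p.1| ∧ |x p.2.2 p.1| < 2 * δ := by
    intro K N
    obtain ⟨k, hkK, hky⟩ := hfreq (max (K + 1) (max Kg ((Finset.range (N + 1)).sup Kx)))
    have hkK1 : K < k := by
      have := le_trans (le_max_left (K + 1) _) hkK; omega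
    have hkg : Kg ≤ k := le_trans (le_trans (le_max_left _ _) (le_max_right (K + 1) _)) hkK
    have hkx : ∀ n ≤ N, |x n k| < δ := by
      intro n hn
      refine hKx n k ?_
      have h1 : Kx n ≤ (Finset.range (N + 1)).sup Kx :=
        Finset.le_sup (Finset.mem_range.mpr (by omega))
      exact le_trans (le_trans h1 (le_trans (le_max_right Kg _) (le_max_right (K + 1) _))) hkK
    have hyk : ε ≤ ⨆ n, |x n k| := by
      have : dist (⨆ n, |x n k|) 0 = ⨆ n, |x n k| := by
        rw [Real.dist_eq, sub_zero, abs_of_nonneg (hy0 k)]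
      rw [this] at hky; exact hky
    have h3δ : 3 * δ < ⨆ n, |x n k| := lt_of_lt_of_le (by rw [hδ]; linarith) hyk
    obtain ⟨n, hn⟩ := (lt_ciSup_iff (hbdd k)).mp h3δ
    have hnN : N < n := by
      by_contra h
      push_neg at h
      exact absurd hn (not_lt.mpr ((hkx n h).le.trans (by linarith)))
    obtain ⟨N', hN'⟩ := (Metric.tendsto_atTop.mp (hlim k)) δ hδ0
    refine ⟨(k, n, max N' (n + 1)), hkK1, hnN, by simp, hn, ?_⟩
    have h1 : |x (max N' (n + 1)) k - g k| < δ := by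
      simpa [Real.dist_eq] using hN' _ (le_max_left _ _)
    calc |x (max N' (n + 1)) k| ≤ |x (max N' (n + 1)) k - g k| + |g k| := by
          have := abs_sub_abs_le_abs_sub (x (max N' (n + 1)) k) (g k); linarith [abs_nonneg (g k)]
      _ < 2 * δ := by linarith [hKg k hkg]
  choose F hF1 hF2 hF3 hF4 hF5 using step
  let seq : ℕ → ℕ × ℕ × ℕ := fun j => Nat.rec (F 0 0) (fun _ p => F p.1 p.2.2) j
  have hkey : ∀ j, ∃ K N, seq j = F K N := by
    intro j
    cases j with
    | zero => exact ⟨0, 0, rfl⟩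
    | succ j => exact ⟨(seq j).1, (seq j).2.2, rfl⟩
  have hprop : ∀ j, (seq j).2.1 < (seq j).2.2 ∧ 3 * δ < |x (seq j).2.1 (seq j).1| ∧
      |x (seq j).2.2 (seq j).1| < 2 * δ := by
    intro j
    obtain ⟨K, N, h⟩ := hkey j
    rw [h]
    exact ⟨hF3 K N, hF4 K N, hF5 K N⟩
  have hkinc : ∀ j, (seq j).1 < (seq (j + 1)).1 := by
    intro j
    have : seq (j + 1) = F (seq j).1 (seq j).2.2 := rfl
    rw [this]
    exact hF1 _ _
  have hninc : ∀ j, (seq j).2.2 < (seq (j + 1)).2.1 := by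
    intro j
    have : seq (j + 1) = F (seq j).1 (seq j).2.2 := rfl
    rw [this]
    exact hF2 _ _
  set φ : ℕ → ℕ := fun i => if i % 2 = 0 then (seq (i / 2)).2.1 else (seq (i / 2)).2.2 with hφdef
  have hφeven : ∀ j, φ (2 * j) = (seq j).2.1 := by
    intro j
    have e1 : (2 * j) % 2 = 0 := by omega
    have e2 : (2 * j) / 2 = j := by omega
    simp only [hφdef]
    rw [if_pos e1, e2]
  have hφodd : ∀ j, φ (2 * j + 1) = (seq j).2.2 := by
    intro j
    have e1 : ¬ (2 * j + 1) % 2 = 0 := by omega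
    have e2 : (2 * j + 1) / 2 = j := by omega
    simp only [hφdef]
    rw [if_neg e1, e2]
  have hφmono : StrictMono φ := by
    apply strictMono_nat_of_lt_succ
    intro i
    rcases Nat.even_or_odd i with ⟨j, hj⟩ | ⟨j, hj⟩
    · have h1 : i = 2 * j := by omega
      rw [h1, hφodd, hφeven]
      exact (hprop j).1
    · have h1 : i = 2 * j + 1 := by omega
      have h2 : 2 * j + 1 + 1 = 2 * (j + 1) := by ring
      rw [h1, h2, hφodd, hφeven]
      exact hninc j
  obtain ⟨z, ⟨hzmem, _, _, _⟩, hzconv⟩ := hc φ hφmono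
  obtain ⟨Nz, hNz⟩ := hzconv 0
  have hlow : ∀ j ≥ Nz, δ < z 0 (seq j).1 := by
    intro j hj
    have hb := hNz (2 * j) (by omega) (seq j).1
    simp only [Pi.sub_apply, Pi.zero_apply, sub_zero] at hb
    rw [hφodd j, hφeven j] at hb
    obtain ⟨-, h4, h5⟩ := hprop j
    have habs : |x (seq j).2.1 (seq j).1| - |x (seq j).2.2 (seq j).1| ≤
        |x (seq j).2.2 (seq j).1 - x (seq j).2.1 (seq j).1| := by
      rw [abs_sub_comm]
      exact abs_sub_abs_le_abs_sub _ _
    linarith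
  have hktend : Tendsto (fun j => (seq j).1) atTop atTop :=
    (strictMono_nat_of_lt_succ hkinc).tendsto_atTop
  have hz0 : Tendsto (fun j => z 0 ((seq j).1)) atTop (nhds 0) :=
    (hzmem 0).comp hktend
  have : δ ≤ 0 := ge_of_tendsto hz0 (eventually_atTop.mpr ⟨Nz, fun j hj => (hlow j hj).le⟩)
  linarith
end

section
/- Let 1 ≤ p < ∞ and let (x_n) ⊂ ℓ_p be Buo-Cauchy with coordinatewise limit x ∈ ℝ^ℕ. Then x ∈ ℓ_p. -/
/-!
If the limit `g` were not in `ℓ_p`, then neither would be `g - x n` for any `n`, so past any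
index there is a finite block of coordinates on which `g - x n`, and hence `x m - x n` for all
large `m`, has `p`-mass greater than `1`. Iterating yields indices `n₀ < n₁ < ⋯` and
consecutive disjoint blocks on which `x (n (k+1)) - x (n k)` has `p`-mass greater than `1`.
Buo-Cauchyness along `(n k)` gives an eventual dominating `z ∈ ℓ_p`, but the block sums of
`|z|^p` tend to `0`.
-/

open Filter

open Topology Finset

lemma summable_abs_rpow_add {ι : Type*} {p : ℝ} (hp : 0 < p) {u v : ι → ℝ}
    (hu : Summable fun i => |u i| ^ p) (hv : Summable fun i => |v i| ^ p) :
    Summable fun i => |u i + v i| ^ p := by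
  have hℓp : ∀ w : ι → ℝ, Memℓp w (ENNReal.ofReal p) ↔ Summable fun i => |w i| ^ p := by
    intro w
    have hp' : (ENNReal.ofReal p).toReal = p := ENNReal.toReal_ofReal hp.le
    rw [memℓp_gen_iff (hp'.symm ▸ hp), hp']
    simp only [Real.norm_eq_abs]
  exact (hℓp (u + v)).1 (((hℓp u).2 hu).add ((hℓp v).2 hv))

lemma exists_sum_Ico_gt_of_not_summable {f : ℕ → ℝ} (hf₀ : ∀ n, 0 ≤ f n) (hf : ¬Summable f)
    (a : ℕ) (C : ℝ) : ∃ b, a < b ∧ C < ∑ j ∈ Ico a b, f j := by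
  have htop : Tendsto (fun n => ∑ j ∈ range n, f j) atTop atTop :=
    not_not.1 (mt (summable_iff_not_tendsto_nat_atTop_of_nonneg hf₀).2 hf)
  obtain ⟨b, hb, hab⟩ := ((htop.eventually_gt_atTop (C + ∑ j ∈ range a, f j)).and
    (eventually_gt_atTop a)).exists
  refine ⟨b, hab, ?_⟩
  rw [sum_Ico_eq_sub _ hab.le]
  linarith

lemma Summable.tendsto_sum_Ico_zero {f : ℕ → ℝ} (hf₀ : ∀ n, 0 ≤ f n) (hf : Summable f)
    {a : ℕ → ℕ} (ha : Monotone a) :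
    Tendsto (fun k => ∑ j ∈ Ico (a k) (a (k + 1)), f j) atTop (𝓝 0) := by
  have htelescope : ∀ K, ∑ k ∈ range K, ∑ j ∈ Ico (a k) (a (k + 1)), f j
      = ∑ j ∈ Ico (a 0) (a K), f j := by
    intro K
    induction K with
    | zero => simp
    | succ K ih =>
      rw [sum_range_succ, ih, sum_Ico_consecutive _ (ha K.zero_le) (ha K.le_succ)]
  refine (summable_of_sum_range_le (c := ∑' j, f j)
    (fun k => sum_nonneg fun j _ => hf₀ j) fun K => ?_).tendsto_atTop_zero
  rw [htelescope]
  exact hf.sum_le_tsum _ fun j _ => hf₀ j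

lemma exists_seq_of_forall_exists {α : Type*} {r : α → α → Prop} (h : ∀ a, ∃ b, r a b)
    (a₀ : α) : ∃ s : ℕ → α, ∀ k, r (s k) (s (k + 1)) := by
  choose F hF using h
  exact ⟨fun k => F^[k] a₀, fun k => by simpa only [Function.iterate_succ_apply'] using hF _⟩

lemma BuoCauchyIn.exists_dominating {X : Type*} {S : Set (X → ℝ)} {f : ℕ → X → ℝ}
    (hf : BuoCauchyIn S f) {φ : ℕ → ℕ} (hφ : StrictMono φ) :
    ∃ z ∈ S, ∃ N, ∀ k ≥ N, ∀ t, |f (φ (k + 1)) t - f (φ k) t| ≤ z t := by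
  obtain ⟨z, ⟨hzS, -⟩, hz⟩ := hf φ hφ
  obtain ⟨N, hN⟩ := hz 0
  exact ⟨z 0, hzS 0, N, fun k hk t => by simpa using hN k hk t⟩

lemma exists_block_sum_rpow_sub_gt_one {p : ℝ} (hp : 0 < p) {x : ℕ → ℕ → ℝ} {g : ℕ → ℝ}
    (hlim : ∀ k, Tendsto (fun n => x n k) atTop (𝓝 (g k))) {n₀ : ℕ}
    (hx : Summable fun k => |x n₀ k| ^ p) (hg : ¬Summable fun k => |g k| ^ p) (a : ℕ) :
    ∃ m b, n₀ < m ∧ a < b ∧ 1 < ∑ j ∈ Ico a b, |x m j - x n₀ j| ^ p := by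
  have hgx : ¬Summable fun k => |g k - x n₀ k| ^ p := fun h =>
    hg (by simpa using summable_abs_rpow_add hp h hx)
  obtain ⟨b, hab, hb⟩ := exists_sum_Ico_gt_of_not_summable (fun _ => by positivity) hgx a 1
  have hconv : Tendsto (fun m => ∑ j ∈ Ico a b, |x m j - x n₀ j| ^ p) atTop
      (𝓝 (∑ j ∈ Ico a b, |g j - x n₀ j| ^ p)) :=
    tendsto_finsetSum _ fun j _ => ((hlim j).sub_const _).abs.rpow_const (Or.inr hp.le)
  obtain ⟨m, hm, hn₀m⟩ :=
    ((hconv.eventually (lt_mem_nhds hb)).and (eventually_gt_atTop n₀)).exists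
  exact ⟨m, b, hn₀m, hab, hm⟩

/-- The coordinatewise limit of a Buo-Cauchy sequence in `ℓ_p` (`1 ≤ p < ∞`)
lies in `ℓ_p`. -/
theorem pointwise_limit_in_lp (p : ℝ) (hp : 1 ≤ p) (x : ℕ → ℕ → ℝ)
    (hmem : ∀ n, Summable (fun k => |x n k| ^ p))
    (hc : BuoCauchyIn {u : ℕ → ℝ | Summable (fun k => |u k| ^ p)} x)
    (g : ℕ → ℝ) (hlim : ∀ k, Tendsto (fun n => x n k) atTop (nhds (g k))) :
    Summable (fun k => |g k| ^ p) := by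
  by_contra hg
  have hp₀ : 0 < p := by linarith
  obtain ⟨s, hs⟩ := exists_seq_of_forall_exists (r := fun s t : ℕ × ℕ =>
      s.1 < t.1 ∧ s.2 < t.2 ∧ 1 < ∑ j ∈ Ico s.2 t.2, |x t.1 j - x s.1 j| ^ p)
    (fun s => by
      obtain ⟨m, b, h⟩ := exists_block_sum_rpow_sub_gt_one hp₀ hlim (hmem s.1) hg s.2
      exact ⟨(m, b), h⟩)
    (0, 0)
  obtain ⟨z, hz, N, hN⟩ := hc.exists_dominating (strictMono_nat_of_lt_succ fun k => (hs k).1)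
  have hblocks := Summable.tendsto_sum_Ico_zero (fun _ => by positivity) hz
    (strictMono_nat_of_lt_succ fun k => (hs k).2.1).monotone
  obtain ⟨k, hk, hkN⟩ :=
    ((hblocks.eventually (gt_mem_nhds one_pos)).and (eventually_ge_atTop N)).exists
  refine hk.not_ge ((hs k).2.2.le.trans (sum_le_sum fun j _ => ?_))
  exact Real.rpow_le_rpow (abs_nonneg _) ((hN k hkN j).trans (le_abs_self _)) hp₀.le
end

section
/- For any nonempty set X, the vector lattice ℓ∞(X) of bounded real-valued functions on X (pointwise order) is sequentially Buo-complete: every Buo-Cauchy sequence (f_n) order-converges to its pointwise limit f ∈ ℓ∞(X), with order bounds given by z_m(x) := sup_{n ≥ m}|f_n(x) − f(x)|. -/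
open Filter

/-- A Buo-Cauchy sequence in `ℓ∞(X)` is pointwise Cauchy. -/
private lemma aux_cauchy {X : Type*} (f : ℕ → X → ℝ) (hc : BuoCauchyIn memLinf f) (x : X) :
    CauchySeq (fun n => f n x) := by
  classical
  rw [Metric.cauchySeq_iff']
  by_contra hcon
  push_neg at hcon
  obtain ⟨ε, hε, H⟩ := hcon
  have H' : ∀ N : ℕ, ∃ n, N < n ∧ ε ≤ |f n x - f N x| := by
    intro N
    obtain ⟨n, hn, hd⟩ := H N
    rw [Real.dist_eq] at hd
    refine ⟨n, ?_, hd⟩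
    rcases eq_or_lt_of_le hn with h | h
    · exfalso; rw [← h] at hd; simp at hd; linarith
    · exact h
  choose F hF1 hF2 using H'
  let φ : ℕ → ℕ := fun j => Nat.rec 0 (fun j prev => if Even j then F prev else prev + 1) j
  have hφs : ∀ j, φ (j + 1) = if Even j then F (φ j) else φ j + 1 := fun j => rfl
  have hmono : StrictMono φ := by
    apply strictMono_nat_of_lt_succ
    intro j
    rw [hφs]
    split
    · exact hF1 (φ j)
    · exact Nat.lt_succ_self _
  obtain ⟨z, ⟨hzS, hzA, hzN, hzInf⟩, hconv⟩ := hc φ hmono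
  have hzx : ∀ m, ε ≤ z m x := by
    intro m
    obtain ⟨N, hN⟩ := hconv m
    have h1 := hN (2 * N) (by omega) x
    have h2 : φ (2 * N + 1) = F (φ (2 * N)) := by
      rw [hφs]; exact if_pos ⟨N, two_mul N⟩
    calc ε ≤ |f (φ (2 * N + 1)) x - f (φ (2 * N)) x| := by rw [h2]; exact hF2 _
      _ ≤ z m x := by simpa using h1
  set w : X → ℝ := fun y => if y = x then ε else 0 with hw
  have hwm : w ∈ memLinf := by
    refine ⟨ε, fun y => ?_⟩
    simp only [hw]
    split
    · simp [abs_of_nonneg hε.le]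
    · simp [hε.le]
  have hwle : ∀ m, w ≤ z m := by
    intro m y
    by_cases hy : y = x
    · simpa [hw, hy] using hzx m
    · simpa [hw, hy] using hzN m y
  have := hzInf w hwm hwle x
  simp [hw] at this
  linarith

/-- A Buo-Cauchy sequence in `ℓ∞(X)` is uniformly bounded relative to its
first term. -/
private lemma aux_bdd {X : Type*} [Nonempty X] (f : ℕ → X → ℝ)
    (hmem : ∀ n, f n ∈ memLinf) (hc : BuoCauchyIn memLinf f) :
    ∃ A : ℝ, ∀ n x, |f n x - f 0 x| ≤ A := by
  classical
  by_contra hcon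
  push_neg at hcon
  choose Mb hMb using hmem
  have hMb0 : ∀ n, 0 ≤ Mb n := fun n => le_trans (abs_nonneg _) (hMb n (Classical.arbitrary X))
  have claim : ∀ (K : ℕ) (M : ℝ), ∃ n, K < n ∧ ∃ x, M < |f n x - f 0 x| := by
    intro K M
    set B : ℝ := (∑ i ∈ Finset.range (K + 1), Mb i) + Mb 0 with hB
    obtain ⟨n, x, hnx⟩ := hcon (max M B)
    refine ⟨n, ?_, x, lt_of_le_of_lt (le_max_left _ _) hnx⟩
    by_contra hK
    push_neg at hK
    have h1 : |f n x - f 0 x| ≤ Mb n + Mb 0 :=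
      le_trans (abs_sub _ _) (add_le_add (hMb n x) (hMb 0 x))
    have h2 : Mb n ≤ ∑ i ∈ Finset.range (K + 1), Mb i :=
      Finset.single_le_sum (fun i _ => hMb0 i) (Finset.mem_range.mpr (by omega))
    have h3 := lt_of_le_of_lt (le_max_right M B) hnx
    rw [hB] at h3
    linarith
  choose F hF1 xw hxw using claim
  let φ : ℕ → ℕ := fun k => Nat.rec 0 (fun k prev => F prev (((k + 1 : ℕ) : ℝ) ^ 2)) k
  have hφs : ∀ k, φ (k + 1) = F (φ k) (((k + 1 : ℕ) : ℝ) ^ 2) := fun k => rfl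
  have hmono : StrictMono φ := strictMono_nat_of_lt_succ fun k => by
    rw [hφs]; exact hF1 _ _
  obtain ⟨z, ⟨hzS, hzA, hzN, hzInf⟩, hconv⟩ := hc φ hmono
  obtain ⟨N, hN⟩ := hconv 0
  obtain ⟨Ms, hMs⟩ := hzS 0
  have hMs0 : 0 ≤ Ms := le_trans (abs_nonneg _) (hMs (Classical.arbitrary X))
  have hstep : ∀ k, N ≤ k → ∀ y, |f (φ (k + 1)) y - f (φ k) y| ≤ Ms := by
    intro k hk y
    have h1 := hN k hk y
    simp only [Pi.sub_apply, Pi.zero_apply, sub_zero] at h1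
    exact le_trans h1 (le_trans (le_abs_self _) (hMs y))
  have htel : ∀ j y, |f (φ (N + j)) y - f (φ N) y| ≤ (j : ℝ) * Ms := by
    intro j
    induction j with
    | zero => intro y; simp
    | succ j ih =>
      intro y
      calc |f (φ (N + (j + 1))) y - f (φ N) y|
          ≤ |f (φ (N + j + 1)) y - f (φ (N + j)) y| + |f (φ (N + j)) y - f (φ N) y| := by
            rw [show N + (j + 1) = N + j + 1 from rfl]
            exact abs_sub_le _ _ _
        _ ≤ Ms + (j : ℝ) * Ms := add_le_add (hstep _ (Nat.le_add_right N j) y) (ih y)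
        _ = ((j + 1 : ℕ) : ℝ) * Ms := by push_cast; ring
  set C : ℝ := Mb (φ N) + Mb 0 with hCdef
  have hC0 : 0 ≤ C := add_nonneg (hMb0 _) (hMb0 _)
  set k : ℕ := N + ⌈Ms + C⌉₊ with hkdef
  have hk1 : (Ms + C + 1 : ℝ) ≤ ((k + 1 : ℕ) : ℝ) := by
    have h1 := Nat.le_ceil (Ms + C)
    have h2 : ((⌈Ms + C⌉₊ : ℕ) : ℝ) ≤ ((k : ℕ) : ℝ) := by
      exact_mod_cast Nat.le_add_left _ _
    push_cast
    linarith
  set y : X := xw (φ k) (((k + 1 : ℕ) : ℝ) ^ 2) with hydef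
  have hlb : (((k + 1 : ℕ) : ℝ)) ^ 2 < |f (φ (k + 1)) y - f 0 y| := by
    rw [hφs]; exact hxw _ _
  have hub : |f (φ (k + 1)) y - f 0 y| ≤ ((k + 1 : ℕ) : ℝ) * Ms + C := by
    have hNk : N ≤ k + 1 := by omega
    have htel' := htel (k + 1 - N) y
    rw [show N + (k + 1 - N) = k + 1 by omega] at htel'
    have hjk : ((k + 1 - N : ℕ) : ℝ) ≤ ((k + 1 : ℕ) : ℝ) := by exact_mod_cast Nat.sub_le _ _
    have hfN : |f (φ N) y - f 0 y| ≤ C :=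
      le_trans (abs_sub _ _) (add_le_add (hMb _ y) (hMb 0 y))
    calc |f (φ (k + 1)) y - f 0 y|
        ≤ |f (φ (k + 1)) y - f (φ N) y| + |f (φ N) y - f 0 y| := abs_sub_le _ _ _
      _ ≤ ((k + 1 - N : ℕ) : ℝ) * Ms + C := add_le_add htel' hfN
      _ ≤ ((k + 1 : ℕ) : ℝ) * Ms + C := by nlinarith
  have hr1 : (1 : ℝ) ≤ ((k + 1 : ℕ) : ℝ) := by exact_mod_cast Nat.one_le_iff_ne_zero.mpr (by omega)
  nlinarith [mul_le_mul_of_nonneg_left hk1 (by linarith : (0:ℝ) ≤ ((k + 1 : ℕ) : ℝ))]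

/-- `ℓ∞(X)` is sequentially Buo-complete: every Buo-Cauchy sequence
order-converges to its pointwise limit, with order bounds
`z m x = ⨆_{n ≥ m} |f n x - g x|`. -/
theorem linfX_buo_complete {X : Type*} [Nonempty X] (f : ℕ → X → ℝ)
    (hmem : ∀ n, f n ∈ memLinf) (hc : BuoCauchyIn memLinf f) :
    ∃ g ∈ memLinf,
      (∀ x, Tendsto (fun n => f n x) atTop (nhds (g x))) ∧
      OrderConvIn memLinf f g ∧
      ∀ z : ℕ → X → ℝ, (z = fun m x => ⨆ n : ℕ, |f (m + n) x - g x|) →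
        DecToZeroIn memLinf z ∧ ∀ m, ∀ n ≥ m, ∀ x, |f n x - g x| ≤ z m x := by
  classical
  have hconv : ∀ x, ∃ l : ℝ, Tendsto (fun n => f n x) atTop (nhds l) :=
    fun x => cauchySeq_tendsto_of_complete (aux_cauchy f hc x)
  choose g hg using hconv
  obtain ⟨A, hA⟩ := aux_bdd f hmem hc
  have hA0 : 0 ≤ A := le_trans (abs_nonneg _) (hA 0 (Classical.arbitrary X))
  have hgA : ∀ x, |g x - f 0 x| ≤ A := by
    intro x
    have h1 : Tendsto (fun n => |f n x - f 0 x|) atTop (nhds |g x - f 0 x|) :=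
      ((hg x).sub_const (f 0 x)).abs
    exact le_of_tendsto h1 (Eventually.of_forall fun n => hA n x)
  have key : ∀ n x, |f n x - g x| ≤ 2 * A := by
    intro n x
    calc |f n x - g x| ≤ |f n x - f 0 x| + |f 0 x - g x| := abs_sub_le _ _ _
      _ ≤ A + A := add_le_add (hA n x) (by rw [abs_sub_comm]; exact hgA x)
      _ = 2 * A := by ring
  obtain ⟨M0, hM0⟩ := hmem 0
  have hgmem : g ∈ memLinf := by
    refine ⟨A + M0, fun x => ?_⟩
    calc |g x| ≤ |g x - f 0 x| + |f 0 x| := by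
          have := abs_sub_le (g x) (f 0 x) 0
          simpa using this
      _ ≤ A + M0 := add_le_add (hgA x) (hM0 x)
  set Z : ℕ → X → ℝ := fun m x => ⨆ n : ℕ, |f (m + n) x - g x| with hZdef
  have hbdd : ∀ m x, BddAbove (Set.range fun n : ℕ => |f (m + n) x - g x|) := by
    intro m x
    exact ⟨2 * A, by rintro r ⟨n, rfl⟩; exact key _ x⟩
  have hZle : ∀ m n, m ≤ n → ∀ x, |f n x - g x| ≤ Z m x := by
    intro m n hmn x
    have := le_ciSup (hbdd m x) (n - m)
    rwa [Nat.add_sub_cancel' hmn] at this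
  have hZub : ∀ m x, Z m x ≤ 2 * A := fun m x => ciSup_le fun n => key _ x
  have hZnn : ∀ m x, 0 ≤ Z m x := fun m x =>
    le_trans (abs_nonneg _) (hZle m m le_rfl x)
  have hZmem : ∀ m, Z m ∈ memLinf := fun m =>
    ⟨2 * A, fun x => by rw [abs_of_nonneg (hZnn m x)]; exact hZub m x⟩
  have hZanti : Antitone Z := by
    apply antitone_nat_of_succ_le
    intro m x
    refine ciSup_le fun n => ?_
    have := le_ciSup (hbdd m x) (n + 1)
    simpa [show m + (n + 1) = m + 1 + n by omega] using this
  have hZinf : ∀ w ∈ memLinf, (∀ m, w ≤ Z m) → w ≤ (0 : X → ℝ) := by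
    intro w _ hwle x
    simp only [Pi.zero_apply]
    refine le_of_forall_pos_le_add fun ε hε => ?_
    obtain ⟨m, hm⟩ := (Metric.tendsto_atTop.mp (hg x)) ε hε
    have hZm : Z m x ≤ ε := ciSup_le fun n => by
      have := hm (m + n) (Nat.le_add_right m n)
      rw [Real.dist_eq] at this
      exact this.le
    calc w x ≤ Z m x := hwle m x
      _ ≤ ε := hZm
      _ = 0 + ε := by ring
  have hdec : DecToZeroIn memLinf Z := ⟨hZmem, hZanti, fun m x => hZnn m x, hZinf⟩
  refine ⟨g, hgmem, hg, ⟨Z, hdec, fun m => ⟨m, fun n hn x => hZle m n hn x⟩⟩, ?_⟩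
  rintro z rfl
  exact ⟨hdec, fun m n hn x => hZle m n hn x⟩
end

section
/- Let E be a vector lattice of real-valued functions on a set X (with pointwise order) in which order convergence implies pointwise convergence, and suppose a sequence (g_n) in E converges uniformly to a function g ∉ E. If the constant functions belong to E, then (g_n) is Buo-Cauchy in E but has no order limit in E. -/
open Filter

/-! Uniform convergence is order convergence as soon as the constants belong to the lattice:
the constants `1 / (m + 1)` decrease to `0` in `S` and dominate the errors uniformly. The
differences along any subsequence of a uniformly convergent sequence tend uniformly to `0`, so
the sequence is Buo-Cauchy. An order limit `h ∈ S` would also be the pointwise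
limit, i.e. `h = G ∉ S`. -/

theorem TendstoUniformly.comp_tendsto {α β ι κ : Type*} [UniformSpace β] {F : ι → α → β}
    {f : α → β} {p : Filter ι} {q : Filter κ} (h : TendstoUniformly F f p) {φ : κ → ι}
    (hφ : Tendsto φ q p) : TendstoUniformly (fun k => F (φ k)) f q :=
  fun u hu => hφ.eventually (h u hu)

theorem TendstoUniformly.sub_comp_strictMono {X β : Type*} [UniformSpace β] [AddGroup β]
    [IsUniformAddGroup β] {g : ℕ → X → β} {G : X → β}
    (h : TendstoUniformly g G atTop) {φ : ℕ → ℕ} (hφ : StrictMono φ) :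
    TendstoUniformly (fun k => g (φ (k + 1)) - g (φ k)) 0 atTop := by
  have hφ' : Tendsto φ atTop atTop := hφ.tendsto_atTop
  have hφ_succ : Tendsto (fun k => φ (k + 1)) atTop atTop := hφ'.comp (tendsto_add_atTop_nat 1)
  rw [← sub_self G]
  exact (h.comp_tendsto hφ_succ).sub (h.comp_tendsto hφ')

theorem decToZeroIn_const {X : Type*} {S : Set (X → ℝ)} (hconst : ∀ c : ℝ, (fun _ : X => c) ∈ S)
    {c : ℕ → ℝ} (hanti : Antitone c) (hnonneg : ∀ m, 0 ≤ c m) (hlim : Tendsto c atTop (nhds 0)) :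
    DecToZeroIn S (fun m _ => c m) :=
  ⟨fun m => hconst (c m), fun _ _ hab _ => hanti hab, fun m _ => hnonneg m,
    fun _ _ hw x => ge_of_tendsto' hlim fun m => hw m x⟩

theorem orderConvIn_of_tendstoUniformly {X : Type*} {S : Set (X → ℝ)}
    (hconst : ∀ c : ℝ, (fun _ : X => c) ∈ S) {f : ℕ → X → ℝ} {g : X → ℝ}
    (h : TendstoUniformly f g atTop) : OrderConvIn S f g := by
  refine ⟨fun m _ => 1 / ((m : ℝ) + 1),
    decToZeroIn_const hconst (fun _ _ => Nat.one_div_le_one_div) (fun _ => by positivity)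
      tendsto_one_div_add_atTop_nhds_zero_nat, fun m => ?_⟩
  obtain ⟨N, hN⟩ :=
    (Metric.tendstoUniformly_iff.mp h _ (Nat.one_div_pos_of_nat (n := m))).exists_forall_of_atTop
  exact ⟨N, fun n hn x => by simpa only [Real.dist_eq, abs_sub_comm] using (hN n hn x).le⟩

theorem buoCauchyIn_of_tendstoUniformly {X : Type*} {S : Set (X → ℝ)}
    (hconst : ∀ c : ℝ, (fun _ : X => c) ∈ S) {g : ℕ → X → ℝ} {G : X → ℝ}
    (h : TendstoUniformly g G atTop) : BuoCauchyIn S g := fun _ hφ =>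
  orderConvIn_of_tendstoUniformly hconst (h.sub_comp_strictMono hφ)

theorem uniform_limit_outside_gives_buoCauchy_without_limit_general
    {X : Type*} (S : Set (X → ℝ))
    (hconst : ∀ c : ℝ, (fun _ : X => c) ∈ S)
    (hpt : ∀ (f : ℕ → X → ℝ), (∀ n, f n ∈ S) → ∀ h ∈ S, OrderConvIn S f h →
      ∀ x, Tendsto (fun n => f n x) atTop (nhds (h x)))
    (g : ℕ → X → ℝ) (hgS : ∀ n, g n ∈ S)
    (G : X → ℝ) (hG : G ∉ S)
    (hunif : TendstoUniformly g G atTop) :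
    BuoCauchyIn S g ∧ ∀ h ∈ S, ¬ OrderConvIn S g h := by
  refine ⟨buoCauchyIn_of_tendstoUniformly hconst hunif, fun h hh hconv => hG ?_⟩
  have hGh : G = h := funext fun x =>
    tendsto_nhds_unique (hunif.tendsto_at x) (hpt g hgS h hh hconv x)
  exact hGh ▸ hh

/-- In a function lattice `S ⊂ ℝ^X` containing the constants, closed under the
vector lattice operations, and in which order convergence implies pointwise
convergence, a sequence converging uniformly to a function outside `S` is
Buo-Cauchy but has no order limit in `S`. -/
theorem uniform_limit_outside_gives_buoCauchy_without_limit
    {X : Type*} (S : Set (X → ℝ))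
    (hconst : ∀ c : ℝ, (fun _ : X => c) ∈ S)
    (hadd : ∀ f ∈ S, ∀ g ∈ S, f + g ∈ S)
    (hneg : ∀ f ∈ S, -f ∈ S)
    (hsup : ∀ f ∈ S, ∀ g ∈ S, f ⊔ g ∈ S)
    (hsmul : ∀ (c : ℝ), ∀ f ∈ S, c • f ∈ S)
    (hpt : ∀ (f : ℕ → X → ℝ), (∀ n, f n ∈ S) → ∀ h ∈ S, OrderConvIn S f h →
      ∀ x, Tendsto (fun n => f n x) atTop (nhds (h x)))
    (g : ℕ → X → ℝ) (hgS : ∀ n, g n ∈ S)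
    (G : X → ℝ) (hG : G ∉ S)
    (hunif : TendstoUniformly g G atTop) :
    BuoCauchyIn S g ∧ ∀ h ∈ S, ¬ OrderConvIn S g h :=
  uniform_limit_outside_gives_buoCauchy_without_limit_general S hconst hpt g hgS G hG hunif
end
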